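/- arXiv:2102.10901 — 5 statements merged into one kernel-verified Lean document; each statement's English description precedes it below -/
import Mathlib

section
/- Let (X, d) be an ultrametric space and (X̃, d̃) its completion. Then D(X, d) = D(X̃, d̃), i.e., no new values of the ultrametric arise after completion. -/
open UniformSpace

private lemma completion_ultra {X : Type*} [MetricSpace X]
    (hu : ∀ x y z : X, dist x y ≤ max (dist x z) (dist z y)) :
    ∀ a b c : Completion X, dist a b ≤ max (dist a c) (dist c b) := by
  intro a b c
  refine Completion.induction_on₃ a b c ?_ ?_
  · have h : Continuous fun p : Completion X × Completion X × Completion X =>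
        (max (dist p.1 p.2.2) (dist p.2.2 p.2.1)) - dist p.1 p.2.1 := by fun_prop
    have := isClosed_le (continuous_const (y := (0:ℝ))) h
    convert this using 1
    ext p
    simp [sub_nonneg]
  · intro x y z
    simp only [Completion.dist_eq]
    exact hu x y z

theorem completion_same_distance_set {X : Type*} [MetricSpace X]
    (hu : ∀ x y z : X, dist x y ≤ max (dist x z) (dist z y)) :
    {r : ℝ | ∃ x y : X, dist x y = r} =
      {r : ℝ | ∃ a b : UniformSpace.Completion X, dist a b = r} := by
  have hultra := completion_ultra hu
  ext r
  simp only [Set.mem_setOf_eq]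
  constructor
  · rintro ⟨x, y, rfl⟩
    exact ⟨x, y, by rw [Completion.dist_eq]⟩
  · rintro ⟨a, b, rfl⟩
    have : Nonempty (Completion X) := ⟨a⟩
    have hne : Nonempty X := (Completion.denseRange_coe (α := X)).nonempty
    rcases eq_or_lt_of_le (dist_nonneg (x := a) (y := b)) with h0 | hpos
    · obtain ⟨x⟩ := hne
      exact ⟨x, x, by simp [← h0]⟩
    · set d := dist a b with hd
      obtain ⟨x, hx⟩ := Metric.denseRange_iff.1 (Completion.denseRange_coe (α := X)) a d hpos
      obtain ⟨y, hy⟩ := Metric.denseRange_iff.1 (Completion.denseRange_coe (α := X)) b d hpos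
      have hx' : dist (x : Completion X) a < d := by rw [dist_comm]; exact hx
      have hy' : dist (y : Completion X) b < d := by rw [dist_comm]; exact hy
      refine ⟨x, y, ?_⟩
      rw [← Completion.dist_eq]
      apply le_antisymm
      · calc dist (x : Completion X) y ≤ max (dist (x : Completion X) a) (dist a y) :=
              hultra _ _ _
          _ ≤ max (dist (x : Completion X) a) (max (dist a b) (dist b y)) := by
              exact max_le_max le_rfl (hultra _ _ _)
          _ ≤ d := by
              refine max_le hx'.le (max_le le_rfl ?_)
              rw [dist_comm]; exact hy'.le
      · by_contra hlt
        push_neg at hlt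
        have : d ≤ max (dist a (x : Completion X)) (max (dist (x : Completion X) y) (dist (y : Completion X) b)) := by
          calc d ≤ max (dist a (x : Completion X)) (dist (x : Completion X) b) := hultra _ _ _
            _ ≤ _ := max_le_max le_rfl (hultra _ _ _)
        have : d < d := lt_of_le_of_lt this (max_lt hx (max_lt hlt hy'))
        exact lt_irrefl _ this
end

section
/- If (X, d) is a totally bounded infinite ultrametric space, then its distance set D(X) is countably infinite. -/
theorem distance_set_countably_infinite {X : Type*} [MetricSpace X] [Infinite X]
    (hu : ∀ x y z : X, dist x y ≤ max (dist x z) (dist z y))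
    (htb : TotallyBounded (Set.univ : Set X)) :
    {r : ℝ | ∃ x y : X, dist x y = r}.Countable ∧
      {r : ℝ | ∃ x y : X, dist x y = r}.Infinite := by
  set S : Set ℝ := {r : ℝ | ∃ x y : X, dist x y = r} with hS
  -- isoceles lemma
  have iso : ∀ x y z : X, dist x z < dist x y → dist z y = dist x y := by
    intro x y z h
    have h1 : dist x y ≤ dist z y := by
      have := hu x y z
      rcases max_cases (dist x z) (dist z y) with ⟨he, _⟩ | ⟨he, _⟩
      · rw [he] at this; linarith
      · rw [he] at this; exact this
    have h2 : dist z y ≤ dist x y := by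
      have := hu z y x
      have hzx : dist z x < dist x y := by rwa [dist_comm]
      rcases max_cases (dist z x) (dist x y) with ⟨he, _⟩ | ⟨he, _⟩
      · rw [he] at this; linarith
      · rw [he] at this; exact this
    linarith
  -- cover extraction
  have cov : ∀ ε : ℝ, 0 < ε → ∃ t : Set X, t.Finite ∧
      ∀ x : X, ∃ c ∈ t, dist x c < ε := by
    intro ε hε
    obtain ⟨t, ht, hcov⟩ := (Metric.totallyBounded_iff).1 htb ε hε
    refine ⟨t, ht, fun x => ?_⟩
    have := hcov (Set.mem_univ x)
    rw [Set.mem_iUnion₂] at this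
    obtain ⟨c, hc, hxc⟩ := this
    exact ⟨c, hc, Metric.mem_ball.1 hxc⟩
  -- finiteness of large distances
  have key : ∀ ε : ℝ, 0 < ε → (S ∩ Set.Ici ε).Finite := by
    intro ε hε
    obtain ⟨t, ht, hc⟩ := cov ε hε
    have hsub : S ∩ Set.Ici ε ⊆ (fun p : X × X => dist p.1 p.2) '' (t ×ˢ t) := by
      rintro r ⟨⟨x, y, rfl⟩, hr⟩
      obtain ⟨c, hct, hxc⟩ := hc x
      obtain ⟨c', hc't, hyc'⟩ := hc y
      have h1 : dist c y = dist x y := iso x y c (lt_of_lt_of_le hxc hr)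
      have h2 : dist c' c = dist y c := by
        apply iso y c c'
        rw [dist_comm y c, h1]
        exact lt_of_lt_of_le hyc' hr
      refine ⟨(c, c'), ⟨hct, hc't⟩, ?_⟩
      simp only
      rw [dist_comm c c', h2, dist_comm y c, h1]
    exact ((ht.prod ht).image _).subset hsub
  -- small positive distances
  have small : ∀ ε : ℝ, 0 < ε → ∃ r ∈ S, 0 < r ∧ r < ε := by
    intro ε hε
    obtain ⟨t, ht, hc⟩ := cov ε hε
    have : Finite t := ht.to_subtype
    have hf : ∀ x : X, ∃ c : t, dist x (c : X) < ε := by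
      intro x
      obtain ⟨c, hct, hxc⟩ := hc x
      exact ⟨⟨c, hct⟩, hxc⟩
    let f : X → t := fun x => (hf x).choose
    obtain ⟨x, y, hxy, hfeq⟩ := Finite.exists_ne_map_eq_of_infinite f
    have hx : dist x (f x : X) < ε := (hf x).choose_spec
    have hy : dist y (f y : X) < ε := (hf y).choose_spec
    refine ⟨dist x y, ⟨x, y, rfl⟩, dist_pos.2 hxy, ?_⟩
    have := hu x y (f x : X)
    have hcy : dist (f x : X) y < ε := by rw [hfeq, dist_comm]; exact hy
    calc dist x y ≤ max (dist x (f x : X)) (dist (f x : X) y) := this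
      _ < ε := max_lt hx hcy
  constructor
  · -- countable
    have hsub : S ⊆ {(0 : ℝ)} ∪ ⋃ n : ℕ, (S ∩ Set.Ici (1 / (n + 1))) := by
      intro r hr
      obtain ⟨x, y, rfl⟩ := hr
      rcases eq_or_lt_of_le (dist_nonneg : (0:ℝ) ≤ dist x y) with h | h
      · exact Or.inl (by simp [← h])
      · obtain ⟨n, hn⟩ := exists_nat_one_div_lt h
        exact Or.inr (Set.mem_iUnion.2 ⟨n, ⟨x, y, rfl⟩, le_of_lt hn⟩)
    refine Set.Countable.mono hsub ?_
    refine (Set.countable_singleton 0).union (Set.countable_iUnion fun n => ?_)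
    exact (key (1 / (n + 1)) (by positivity)).countable
  · -- infinite
    intro hfin
    have hT : (S ∩ Set.Ioi 0).Finite := hfin.subset Set.inter_subset_left
    obtain ⟨r1, h1S, h1pos, _⟩ := small 1 one_pos
    have hne : (S ∩ Set.Ioi 0).Nonempty := ⟨r1, h1S, h1pos⟩
    obtain ⟨m, hm, hmin⟩ := Set.Finite.exists_minimalFor id _ hT hne
    obtain ⟨r, hrS, hrpos, hrm⟩ := small m hm.2
    have := hmin (j := r) ⟨hrS, hrpos⟩ (le_of_lt hrm)
    simp only [id] at this
    linarith
end

section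
/- Let (X, d) be a compact ultrametric space and let p > 0 belong to the distance set D(X). Then p is an isolated point of D(X) considered as a subspace of ℝ with the standard metric. -/
lemma ultra_isosceles {X : Type*} [MetricSpace X]
    (hu : ∀ x y z : X, dist x y ≤ max (dist x z) (dist z y))
    {x x' y : X} (h : dist x x' < dist x y) : dist x' y = dist x y := by
  apply le_antisymm
  · have := hu x' y x
    rw [dist_comm x' x] at this
    exact this.trans (max_le (le_of_lt h) le_rfl)
  · have := hu x y x'
    rcases max_cases (dist x x') (dist x' y) with ⟨he, _⟩ | ⟨he, _⟩
    · rw [he] at this; exact absurd (lt_of_le_of_lt this h) (lt_irrefl _)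
    · rwa [he] at this

theorem positive_distance_isolated {X : Type*} [MetricSpace X] [CompactSpace X]
    (hu : ∀ x y z : X, dist x y ≤ max (dist x z) (dist z y))
    (p : ℝ) (hp : p ∈ {r : ℝ | ∃ x y : X, dist x y = r}) (hp0 : 0 < p) :
    ∃ ε > 0, ∀ q ∈ {r : ℝ | ∃ x y : X, dist x y = r}, |q - p| < ε → q = p := by
  by_contra hcon
  push_neg at hcon
  have h' : ∀ n : ℕ, ∃ x y : X, |dist x y - p| < 1 / (n + 1) ∧ dist x y ≠ p := by
    intro n
    obtain ⟨q, hq, hqp, hqne⟩ := hcon (1 / (n + 1)) (by positivity)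
    obtain ⟨x, y, hxy⟩ := hq
    exact ⟨x, y, by rw [hxy]; exact ⟨hqp, hqne⟩⟩
  choose f g h1 h2 using h'
  obtain ⟨⟨a, b⟩, -, φ, hφ, ht⟩ :=
    isCompact_univ.tendsto_subseq (x := fun n => ((f n, g n) : X × X)) (fun n => Set.mem_univ _)
  have ha : Filter.Tendsto (fun n => f (φ n)) Filter.atTop (nhds a) :=
    (continuous_fst.continuousAt.tendsto).comp ht
  have hb : Filter.Tendsto (fun n => g (φ n)) Filter.atTop (nhds b) :=
    (continuous_snd.continuousAt.tendsto).comp ht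
  have hd : Filter.Tendsto (fun n => dist (f (φ n)) (g (φ n))) Filter.atTop (nhds (dist a b)) :=
    ha.dist hb
  have hdp : Filter.Tendsto (fun n => dist (f (φ n)) (g (φ n))) Filter.atTop (nhds p) := by
    rw [Metric.tendsto_atTop]
    intro ε hε
    obtain ⟨N, hN⟩ := exists_nat_gt (1 / ε)
    refine ⟨N, fun n hn => ?_⟩
    have h1n := h1 (φ n)
    have hφn : (N : ℝ) ≤ φ n := by
      exact_mod_cast le_trans hn (hφ.le_apply)
    have : 1 / ((φ n : ℝ) + 1) ≤ 1 / ((N : ℝ) + 1) := by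
      apply one_div_le_one_div_of_le (by positivity) (by linarith)
    have hNe : 1 / ((N : ℝ) + 1) < ε := by
      rw [div_lt_iff₀ (by positivity)]
      rw [div_lt_iff₀ hε] at hN
      nlinarith
    rw [Real.dist_eq]
    linarith [h1 (φ n)]
  have hab : dist a b = p := tendsto_nhds_unique hd hdp
  have hA : ∀ᶠ n in Filter.atTop, f (φ n) ∈ Metric.ball a p :=
    ha (Metric.ball_mem_nhds a hp0)
  have hB : ∀ᶠ n in Filter.atTop, g (φ n) ∈ Metric.ball b p :=
    hb (Metric.ball_mem_nhds b hp0)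
  obtain ⟨n, hna, hnb⟩ := (hA.and hB).exists
  rw [Metric.mem_ball] at hna hnb
  have e1 : dist (f (φ n)) b = dist a b := by
    apply ultra_isosceles hu
    rw [dist_comm a (f (φ n)), hab]
    exact hna
  have e2 : dist (g (φ n)) (f (φ n)) = dist b (f (φ n)) := by
    apply ultra_isosceles hu
    rw [dist_comm b (g (φ n)), dist_comm b (f (φ n)), e1, hab]
    exact hnb
  apply h2 (φ n)
  rw [dist_comm, e2, dist_comm, e1, hab]
end

section
/- A set A ⊆ ℝ≥0 is the distance set of some infinite totally bounded ultrametric space if and only if there is a strictly decreasing sequence (xₙ) of positive reals converging to 0 such that A = {0} ∪ {xₙ : n ∈ ℕ}. -/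
theorem exists_greatest_in' (S : Set ℝ) (h1 : ∀ s ∈ S, 0 < s)
    (h2 : ∀ r : ℝ, 0 < r → (S ∩ Set.Ici r).Finite)
    (T : Set ℝ) (hTS : T ⊆ S) (hne : T.Nonempty) :
    ∃ m ∈ T, ∀ t ∈ T, t ≤ m := by
  obtain ⟨b, hbT⟩ := hne
  have hb0 : 0 < b := h1 b (hTS hbT)
  have hfin : (T ∩ Set.Ici b).Finite :=
    (h2 b hb0).subset (fun t ht => ⟨hTS ht.1, ht.2⟩)
  obtain ⟨m, hm, hmax⟩ := hfin.exists_maximalFor id _ ⟨b, hbT, le_refl b⟩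
  refine ⟨m, hm.1, fun t ht => ?_⟩
  rcases le_total t b with h | h
  · exact h.trans hm.2
  · rcases le_total t m with h' | h'
    · exact h'
    · exact (hmax (j := t) ⟨ht, h⟩ h')

theorem exists_strictAnti_enum (S : Set ℝ) (h1 : ∀ s ∈ S, 0 < s)
    (h2 : ∀ r : ℝ, 0 < r → (S ∩ Set.Ici r).Finite)
    (h3 : ∀ r : ℝ, 0 < r → ∃ s ∈ S, s < r) :
    ∃ x : ℕ → ℝ, StrictAnti x ∧ (∀ n, 0 < x n) ∧
      Filter.Tendsto x Filter.atTop (nhds 0) ∧ S = Set.range x := by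
  classical
  -- global maximum
  obtain ⟨m₀, hm₀S, hm₀max⟩ := exists_greatest_in' S h1 h2 S subset_rfl
    ((h3 1 one_pos).imp fun s hs => hs.1)
  -- next element function
  have hnext : ∀ r : ℝ, 0 < r → ∃ m, m ∈ S ∧ m < r ∧ ∀ t ∈ S, t < r → t ≤ m := by
    intro r hr
    obtain ⟨b, hbS, hbr⟩ := h3 r hr
    obtain ⟨m, hm, hmax⟩ := exists_greatest_in' S h1 h2 (S ∩ Set.Iio r)
      (fun t ht => ht.1) ⟨b, hbS, hbr⟩
    exact ⟨m, hm.1, hm.2, fun t htS htr => hmax t ⟨htS, htr⟩⟩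
  choose g hgS hglt hgmax using hnext
  -- the sequence, bundled with positivity
  let f : {r : ℝ // 0 < r} → {r : ℝ // 0 < r} :=
    fun p => ⟨g p.1 p.2, h1 _ (hgS p.1 p.2)⟩
  let x : ℕ → ℝ := fun n => (f^[n] ⟨m₀, h1 m₀ hm₀S⟩).1
  have hpos : ∀ n, 0 < x n := fun n => (f^[n] ⟨m₀, h1 m₀ hm₀S⟩).2
  have hsucc : ∀ n, x (n + 1) = g (x n) (hpos n) := by
    intro n
    show (f^[n+1] _).1 = _
    rw [Function.iterate_succ_apply']
  have hxS : ∀ n, x n ∈ S := by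
    intro n
    induction n with
    | zero => exact hm₀S
    | succ k ih => rw [hsucc k]; exact hgS _ _
  have hdec : ∀ n, x (n + 1) < x n := fun n => by rw [hsucc n]; exact hglt _ _
  have hanti : StrictAnti x := strictAnti_nat_of_succ_lt hdec
  have hsmall : ∀ ε : ℝ, 0 < ε → ∃ N, x N < ε := by
    intro ε hε
    by_contra h
    push_neg at h
    have : (S ∩ Set.Ici ε).Infinite :=
      Set.infinite_of_injective_forall_mem (f := x) hanti.injective
        (fun n => ⟨hxS n, h n⟩)
    exact this (h2 ε hε)
  have htend : Filter.Tendsto x Filter.atTop (nhds 0) := by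
    rw [Metric.tendsto_atTop]
    intro ε hε
    obtain ⟨N, hN⟩ := hsmall ε hε
    refine ⟨N, fun n hn => ?_⟩
    rw [Real.dist_eq, sub_zero, abs_of_pos (hpos n)]
    exact lt_of_le_of_lt (hanti.antitone hn) hN
  refine ⟨x, hanti, hpos, htend, ?_⟩
  apply Set.eq_of_subset_of_subset
  · intro s hs
    have hs0 : 0 < s := h1 s hs
    have hex : ∃ n, x n < s := hsmall s hs0
    have hspec : x (Nat.find hex) < s := Nat.find_spec hex
    rcases h0 : Nat.find hex with _ | k
    all_goals rw [h0] at hspec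
    · exact absurd (hm₀max s hs) (not_le.mpr hspec)
    · have hk : ¬ x k < s := Nat.find_min hex (by omega)
      push_neg at hk
      rcases eq_or_lt_of_le hk with h | h
      · exact ⟨k, h.symm⟩
      · have := hgmax (x k) (hpos k) s hs h
        rw [← hsucc k] at this
        exact absurd hspec (not_lt.mpr this)
  · rintro s ⟨n, rfl⟩
    exact hxS n


noncomputable def umDist (x : ℕ → ℝ) (m n : ℕ) : ℝ :=
  if m = n then 0 else x (min m n)

theorem umDist_nonneg (x : ℕ → ℝ) (hpos : ∀ n, 0 < x n) (m n : ℕ) :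
    0 ≤ umDist x m n := by
  unfold umDist; split
  · exact le_refl _
  · exact (hpos _).le

theorem umDist_comm (x : ℕ → ℝ) (m n : ℕ) : umDist x m n = umDist x n m := by
  unfold umDist
  rw [min_comm]
  rcases eq_or_ne m n with rfl | h
  · simp
  · rw [if_neg h, if_neg (Ne.symm h)]

theorem umDist_ultra (x : ℕ → ℝ) (hpos : ∀ n, 0 < x n) (hanti : StrictAnti x)
    (m k n : ℕ) : umDist x m n ≤ max (umDist x m k) (umDist x k n) := by
  rcases eq_or_ne m n with rfl | hmn
  · simpa [umDist] using le_max_of_le_left (umDist_nonneg x hpos m k)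
  · rcases eq_or_ne m k with rfl | hmk
    · exact le_max_of_le_right (le_refl _)
    · rcases eq_or_ne k n with rfl | hkn
      · exact le_max_of_le_left (le_refl _)
      · rw [umDist, if_neg hmn, umDist, if_neg hmk, umDist, if_neg hkn]
        rcases le_total m n with h | h
        · exact le_max_of_le_left (hanti.antitone (by omega))
        · exact le_max_of_le_right (hanti.antitone (by omega))

noncomputable def umSpace (x : ℕ → ℝ) (hpos : ∀ n, 0 < x n) (hanti : StrictAnti x) :
    MetricSpace ℕ where
  dist := umDist x
  dist_self n := by simp [umDist]
  dist_comm := umDist_comm x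
  dist_triangle m k n := by
    refine (umDist_ultra x hpos hanti m k n).trans ?_
    exact max_le_add_of_nonneg (umDist_nonneg x hpos m k) (umDist_nonneg x hpos k n)
  eq_of_dist_eq_zero {m n} h := by
    by_contra hmn
    have h' : umDist x m n = 0 := h
    rw [umDist, if_neg hmn] at h'
    exact (hpos (min m n)).ne' h'

theorem totally_bounded_distance_set_characterization (A : Set ℝ) (hA : ∀ a ∈ A, 0 ≤ a) :
    (∃ (X : Type) (_ : MetricSpace X) (_ : Infinite X),
        (∀ x y z : X, dist x y ≤ max (dist x z) (dist z y)) ∧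
        TotallyBounded (Set.univ : Set X) ∧
        {r : ℝ | ∃ x y : X, dist x y = r} = A) ↔
      (∃ x : ℕ → ℝ, StrictAnti x ∧ (∀ n, 0 < x n) ∧
        Filter.Tendsto x Filter.atTop (nhds 0) ∧ A = {0} ∪ Set.range x) := by
  constructor
  · rintro ⟨X, inst, hinf, hultra, htb, hDA⟩
    have hiso : ∀ a b c : X, dist a c < dist a b → dist c b = dist a b := by
      intro a b c h
      have h1 : dist c b ≤ dist a b := by
        have h' := hultra c b a
        rw [dist_comm c a] at h'
        exact h'.trans (max_le h.le le_rfl)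
      have h2 : dist a b ≤ dist c b := by
        by_contra hcb
        push_neg at hcb
        exact absurd ((hultra a b c).trans_lt (max_lt h hcb)) (lt_irrefl _)
      exact le_antisymm h1 h2
    set S := A \ {0} with hS
    have h1' : ∀ s ∈ S, 0 < s := by
      intro s hs
      exact (hA s hs.1).lt_of_ne (fun h => hs.2 (by simpa using h.symm))
    have hcov : ∀ r : ℝ, 0 < r → ∃ t : Set X, t.Finite ∧ ∀ z : X, ∃ y ∈ t, dist z y < r := by
      intro r hr
      obtain ⟨t, htf, hc⟩ := Metric.totallyBounded_iff.mp htb r hr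
      refine ⟨t, htf, fun z => ?_⟩
      have := hc (Set.mem_univ z)
      simpa [Metric.mem_ball] using this
    have h2' : ∀ r : ℝ, 0 < r → (S ∩ Set.Ici r).Finite := by
      intro r hr
      obtain ⟨t, htf, hc⟩ := hcov r hr
      choose c hct hcd using hc
      have hsub : S ∩ Set.Ici r ⊆ (fun p : X × X => dist p.1 p.2) '' (t ×ˢ t) := by
        rintro s ⟨⟨hsA, _⟩, hsr⟩
        rw [← hDA] at hsA
        obtain ⟨a, b, rfl⟩ := hsA
        have hsr' : r ≤ dist a b := hsr
        have h1 : dist (c a) b = dist a b := hiso a b (c a) (lt_of_lt_of_le (hcd a) hsr')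
        have h2 : dist b (c a) = dist a b := by rw [dist_comm]; exact h1
        have h3 : dist (c b) (c a) = dist b (c a) :=
          hiso b (c a) (c b) (by rw [h2]; exact lt_of_lt_of_le (hcd b) hsr')
        exact ⟨(c b, c a), ⟨hct b, hct a⟩, by simp only []; rw [h3, h2]⟩
      exact ((htf.prod htf).image _).subset hsub
    have h3' : ∀ r : ℝ, 0 < r → ∃ s ∈ S, s < r := by
      intro r hr
      obtain ⟨t, htf, hc⟩ := hcov r hr
      choose c hct hcd using hc
      haveI : Finite t := htf.to_subtype
      obtain ⟨a, b, hab, hfab⟩ :=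
        Finite.exists_ne_map_eq_of_infinite (fun z : X => (⟨c z, hct z⟩ : t))
      have hcab : c a = c b := congrArg Subtype.val hfab
      have hb : dist (c a) b < r := by rw [hcab, dist_comm]; exact hcd b
      have hlt : dist a b < r := lt_of_le_of_lt (hultra a b (c a)) (max_lt (hcd a) hb)
      refine ⟨dist a b, ⟨by rw [← hDA]; exact ⟨a, b, rfl⟩, by simpa using dist_ne_zero.mpr hab⟩, hlt⟩
    obtain ⟨x, hanti, hpos, htend, hrange⟩ := exists_strictAnti_enum S h1' h2' h3'
    refine ⟨x, hanti, hpos, htend, ?_⟩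
    have h0A : (0 : ℝ) ∈ A := by
      rw [← hDA]
      obtain ⟨z⟩ : Nonempty X := inferInstance
      exact ⟨z, z, dist_self z⟩
    rw [← hrange, hS]
    exact (Set.union_diff_cancel (Set.singleton_subset_iff.mpr h0A)).symm
  · rintro ⟨x, hanti, hpos, htend, hAeq⟩
    refine ⟨ℕ, umSpace x hpos hanti, inferInstance, ?_, ?_, ?_⟩
    · intro a b k
      show umDist x a b ≤ max (umDist x a k) (umDist x k b)
      exact umDist_ultra x hpos hanti a k b
    · rw [@Metric.totallyBounded_iff ℕ (umSpace x hpos hanti).toPseudoMetricSpace]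
      intro ε hε
      obtain ⟨N, hN⟩ : ∃ N, x N < ε := (htend.eventually_lt_const hε).exists
      refine ⟨↑(Finset.range (N + 1)), (Finset.range (N + 1)).finite_toSet, ?_⟩
      intro n _
      rw [Set.mem_iUnion₂]
      by_cases h : n ≤ N
      · refine ⟨n, by simp; omega, ?_⟩
        show umDist x n n < ε
        rw [umDist]; simpa using hε
      · refine ⟨N, by simp, ?_⟩
        show umDist x n N < ε
        rw [umDist, if_neg (by omega), min_eq_right (by omega)]
        exact hN
    · rw [hAeq]
      ext r
      simp only [Set.mem_setOf_eq, Set.mem_union, Set.mem_singleton_iff, Set.mem_range]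
      constructor
      · rintro ⟨m, n, rfl⟩
        rcases eq_or_ne m n with rfl | h
        · left; show umDist x m m = 0; rw [umDist]; simp
        · right
          refine ⟨min m n, ?_⟩
          show x (min m n) = umDist x m n
          rw [umDist, if_neg h]
      · rintro (rfl | ⟨k, rfl⟩)
        · exact ⟨0, 0, by show umDist x 0 0 = 0; rw [umDist]; simp⟩
        · refine ⟨k, k + 1, ?_⟩
          show umDist x k (k + 1) = x k
          rw [umDist, if_neg (by omega), min_eq_left (by omega)]
end

section
/- A function f : ℝ≥0 → ℝ≥0 is ultrametric preserving (i.e., f ∘ d is an ultrametric on X for every ultrametric space (X, d)) if and only if f is increasing and f(x) = 0 holds exactly when x = 0. -/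
def IsUltrametricOn {X : Type} (d : X → X → NNReal) : Prop :=
  (∀ x y : X, d x y = 0 ↔ x = y) ∧ (∀ x y : X, d x y = d y x) ∧
    (∀ x y z : X, d x y ≤ max (d x z) (d z y))

theorem ultrametric_preserving_iff (f : NNReal → NNReal) :
    (∀ (X : Type) (d : X → X → NNReal), IsUltrametricOn d →
        IsUltrametricOn (fun x y => f (d x y))) ↔
      (Monotone f ∧ ∀ x : NNReal, f x = 0 ↔ x = 0) := by
  constructor
  · intro h
    have h0 : f 0 = 0 := by
      have hu : IsUltrametricOn (fun (_ _ : Unit) => (0 : NNReal)) :=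
        ⟨fun x y => by simp, fun x y => rfl, fun x y z => by simp⟩
      exact ((h Unit _ hu).1 () ()).mpr rfl
    have hpos : ∀ x : NNReal, x ≠ 0 → f x ≠ 0 := by
      intro x hx
      have hu : IsUltrametricOn (fun (i j : Bool) => if i = j then 0 else x) := by
        refine ⟨?_, ?_, ?_⟩
        · intro i j; cases i <;> cases j <;> simp [hx]
        · intro i j; cases i <;> cases j <;> simp
        · intro i j k; cases i <;> cases j <;> cases k <;> simp
      have := (h Bool _ hu).1 false true
      simp only [if_neg (by simp : (false : Bool) ≠ true)] at this
      intro hc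
      exact (by simp : (false : Bool) ≠ true) (this.mp hc)
    constructor
    · intro a b hab
      by_cases ha : a = 0
      · simp [ha, h0]
      · have hb : b ≠ 0 := fun hb => ha (le_antisymm (hb ▸ hab) zero_le)
        set d : Fin 3 → Fin 3 → NNReal :=
          fun i j => if i = j then 0 else if i ≠ 2 ∧ j ≠ 2 then a else b with hd
        have hu : IsUltrametricOn d := by
          refine ⟨?_, ?_, ?_⟩
          · intro i j
            fin_cases i <;> fin_cases j <;> simp [hd, ha, hb]
          · intro i j
            fin_cases i <;> fin_cases j <;> simp [hd]
          · intro i j k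
            fin_cases i <;> fin_cases j <;> fin_cases k <;>
              simp [hd, hab, le_max_iff, le_refl]
        have ht := (h (Fin 3) d hu).2.2 0 1 2
        have e1 : d 0 1 = a := by simp [hd]
        have e2 : d 0 2 = b := by simp [hd]
        have e3 : d 2 1 = b := by simp [hd]
        simpa [e1, e2, e3] using ht
    · intro x
      constructor
      · intro hfx
        by_contra hx
        exact hpos x hx hfx
      · intro hx; simp [hx, h0]
  · rintro ⟨hmono, hzero⟩ X d ⟨h1, h2, h3⟩
    refine ⟨fun x y => (hzero _).trans (h1 x y), fun x y => by simp [h2 x y], fun x y z => ?_⟩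
    calc f (d x y) ≤ f (max (d x z) (d z y)) := hmono (h3 x y z)
      _ = max (f (d x z)) (f (d z y)) := hmono.map_max
end
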